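/- arXiv:2506.12864 — 3 statements merged into one kernel-verified Lean document; each statement's English description precedes it below -/
import Mathlib

section
/- For every x ∈ (0, π/2), tan(x) > x + x³/3. -/
/-! The function `tan y - y - y ^ 3 / 3` vanishes at `0` and its derivative
`1 + tan² y - 1 - y² = tan² y - y²` is positive on `(0, π/2)` because `y < tan y` there,
so it is strictly increasing on `[0, π/2)`. -/

open Real Set

theorem Real.hasDerivAt_tan_one_add_tan_sq {x : ℝ} (h : cos x ≠ 0) :
    HasDerivAt tan (1 + tan x ^ 2) x := by
  simpa only [one_div, ← inv_one_add_tan_sq h, inv_inv] using hasDerivAt_tan h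

theorem hasDerivAt_tan_sub_id_sub_cube {x : ℝ} (h : cos x ≠ 0) :
    HasDerivAt (fun y => tan y - y - y ^ 3 / 3) (tan x ^ 2 - x ^ 2) x := by
  have hcube : HasDerivAt (fun y : ℝ => y ^ 3 / 3) (x ^ 2) x := by
    simpa using (hasDerivAt_pow 3 x).div_const 3
  exact (((hasDerivAt_tan_one_add_tan_sq h).sub (hasDerivAt_id' x)).sub hcube).congr_deriv
    (by ring)

theorem strictMonoOn_tan_sub_id_sub_cube :
    StrictMonoOn (fun y => tan y - y - y ^ 3 / 3) (Ico 0 (π / 2)) := by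
  have hcos : ∀ y ∈ Ico 0 (π / 2), cos y ≠ 0 := fun y hy =>
    (cos_pos_of_mem_Ioo ⟨by linarith [pi_pos, hy.1], hy.2⟩).ne'
  refine strictMonoOn_of_hasDerivWithinAt_pos (convex_Ico 0 (π / 2))
    (fun y hy => (hasDerivAt_tan_sub_id_sub_cube (hcos y hy)).continuousAt.continuousWithinAt)
    (fun y hy => (hasDerivAt_tan_sub_id_sub_cube (hcos y (interior_subset hy))).hasDerivWithinAt)
    fun y hy => ?_
  rw [interior_Ico] at hy
  exact sub_pos.2 (pow_lt_pow_left₀ (lt_tan hy.1 hy.2) hy.1.le two_ne_zero)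

theorem tan_gt_add_cube (x : ℝ) (hx : x ∈ Set.Ioo 0 (π / 2)) :
    x + x ^ 3 / 3 < Real.tan x := by
  have h := strictMonoOn_tan_sub_id_sub_cube ⟨le_rfl, by linarith [pi_pos]⟩
    (Ioo_subset_Ico_self hx) hx.1
  simp only [tan_zero] at h
  linarith
end

section
/- The function x ↦ tan(x)/x is strictly increasing on the open interval (0, π/2). -/
/-! `tan x / x` is the slope of the secant of `tan` through `0` and `x`, and `tan` is strictly
convex on `[0, π/2)` because its derivative `1 / cos² x` increases there. -/

open Real Set

theorem Real.strictMonoOn_deriv_tan : StrictMonoOn (deriv tan) (Ico 0 (π / 2)) := by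
  intro x hx y hy hxy
  have hcos_y : 0 < cos y := cos_pos_of_mem_Ioo ⟨by linarith [pi_pos, hy.1], hy.2⟩
  have hcos_lt : cos y < cos x :=
    strictAntiOn_cos ⟨hx.1, by linarith [hx.2, pi_pos]⟩ ⟨hy.1, by linarith [hy.2, pi_pos]⟩ hxy
  rw [deriv_tan, deriv_tan]
  gcongr

theorem Real.strictConvexOn_tan : StrictConvexOn ℝ (Ico 0 (π / 2)) tan := by
  refine StrictMonoOn.strictConvexOn_of_deriv (convex_Ico _ _) ?_
    (strictMonoOn_deriv_tan.mono interior_subset)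
  exact continuousOn_tan.mono fun x hx =>
    (cos_pos_of_mem_Ioo ⟨by linarith [pi_pos, hx.1], hx.2⟩).ne'

theorem tan_div_self_strictMonoOn :
    StrictMonoOn (fun x : ℝ => Real.tan x / x) (Set.Ioo 0 (π / 2)) := by
  intro x hx y hy hxy
  have hzero : (0 : ℝ) ∈ Ico 0 (π / 2) := ⟨le_rfl, by positivity⟩
  simpa using strictConvexOn_tan.secant_strict_mono hzero (Ioo_subset_Ico_self hx)
    (Ioo_subset_Ico_self hy) hx.1.ne' hy.1.ne' hxy
end

section
/- For every p > 0, the asymptotic expansion of the wasted area holds: n²·(p²/(4π) − p²/(4 n tan(π/n))) → p²π/12 as n → ∞. -/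
/-!
With `x = π / n` one has `n² · W_n = (p² π / 4) · (1 - x / tan x) / x²`, and
`(1 - x / tan x) / x² = ((tan x - x) / x³) · (x / tan x) → 1/3`: L'Hôpital reduces
`(tan x - x) / x³` to `tan² x / (3 x²) = (tan x / x)² / 3`.
-/

open Real Filter Topology

lemma Real.tendsto_tan_div_self_nhdsNE : Tendsto (fun x => tan x / x) (𝓝[≠] 0) (𝓝 1) := by
  have hderiv : HasDerivAt tan 1 0 := by simpa using hasDerivAt_tan (x := 0) (by simp)
  simpa [div_eq_inv_mul] using hderiv.tendsto_slope_zero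

lemma Real.hasDerivAt_tan_sub_self {x : ℝ} (hx : cos x ≠ 0) :
    HasDerivAt (fun y => tan y - y) (tan x ^ 2) x := by
  refine ((hasDerivAt_tan hx).sub (hasDerivAt_id' x)).congr_deriv ?_
  rw [one_div, ← inv_one_add_tan_sq hx, inv_inv]
  ring

lemma Real.tendsto_tan_sub_self_div_pow_three_nhdsNE :
    Tendsto (fun x => (tan x - x) / x ^ 3) (𝓝[≠] 0) (𝓝 (1 / 3)) := by
  have hcos : ∀ᶠ x in 𝓝[≠] (0 : ℝ), cos x ≠ 0 :=
    nhdsWithin_le_nhds (continuous_cos.continuousAt.eventually_ne (by simp))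
  have hcube_ne : ∀ᶠ x in 𝓝[≠] (0 : ℝ), 3 * x ^ 2 ≠ 0 := by
    filter_upwards [self_mem_nhdsWithin] with x hx
    exact mul_ne_zero three_ne_zero (pow_ne_zero 2 hx)
  refine HasDerivAt.lhopital_zero_nhdsNE (hcos.mono fun x hx => hasDerivAt_tan_sub_self hx)
    (.of_forall fun x => by simpa using hasDerivAt_pow 3 x) hcube_ne ?_ ?_ ?_
  · have : ContinuousAt (fun x => tan x - x) 0 :=
      (continuousAt_tan.2 (by simp)).sub continuousAt_id
    simpa using this.tendsto.mono_left nhdsWithin_le_nhds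
  · simpa using ((continuous_pow 3).tendsto (0 : ℝ)).mono_left nhdsWithin_le_nhds
  · have h := (tendsto_tan_div_self_nhdsNE.pow 2).div_const 3
    rw [one_pow] at h
    refine h.congr' ?_
    filter_upwards [self_mem_nhdsWithin] with x hx
    field_simp

lemma Real.tendsto_one_sub_div_tan_div_sq_nhdsNE :
    Tendsto (fun x => (1 - x / tan x) / x ^ 2) (𝓝[≠] 0) (𝓝 (1 / 3)) := by
  have h := tendsto_tan_sub_self_div_pow_three_nhdsNE.mul
    (tendsto_tan_div_self_nhdsNE.inv₀ one_ne_zero)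
  rw [inv_one, mul_one] at h
  refine h.congr' ?_
  filter_upwards [self_mem_nhdsWithin, tendsto_tan_div_self_nhdsNE.eventually_ne one_ne_zero]
    with x hx htan_div
  have htan : tan x ≠ 0 := (div_ne_zero_iff.1 htan_div).1
  field_simp

lemma tendsto_const_div_natCast_nhdsNE (c : ℝ) (hc : c ≠ 0) :
    Tendsto (fun n : ℕ => c / n) atTop (𝓝[≠] 0) :=
  tendsto_nhdsWithin_iff.2 ⟨tendsto_const_div_atTop_nhds_zero_nat c,
    (eventually_ne_atTop 0).mono fun _ hn => div_ne_zero hc (Nat.cast_ne_zero.2 hn)⟩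

theorem wasted_area_asymptotics_general (p : ℝ) :
    Filter.Tendsto
      (fun n : ℕ => (n : ℝ) ^ 2 * (p ^ 2 / (4 * π) - p ^ 2 / (4 * n * Real.tan (π / n))))
      Filter.atTop (nhds (p ^ 2 * π / 12)) := by
  have h := (tendsto_one_sub_div_tan_div_sq_nhdsNE.comp
    (tendsto_const_div_natCast_nhdsNE π pi_ne_zero)).const_mul (p ^ 2 * π / 4)
  rw [show p ^ 2 * π / 4 * (1 / 3) = p ^ 2 * π / 12 by ring] at h
  refine h.congr' ?_
  filter_upwards [eventually_ne_atTop 0] with _ hn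
  simp only [Function.comp_apply]
  field_simp

theorem wasted_area_asymptotics (p : ℝ) (hp : 0 < p) :
    Filter.Tendsto
      (fun n : ℕ => (n : ℝ) ^ 2 * (p ^ 2 / (4 * π) - p ^ 2 / (4 * n * Real.tan (π / n))))
      Filter.atTop (nhds (p ^ 2 * π / 12)) :=
  wasted_area_asymptotics_general p
end
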